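/- Let S_1, …, S_m be integrally convex subsets of ℤ^n with n ≥ 2, and W = S_1 + ⋯ + S_m. For any integral point x ∈ conv(W) ∩ ℤ^n, there exists z ∈ W with ‖x − z‖_∞ ≤ min(n,m) − 1. -/

import Mathlib

/-!
Cayley trick: `x = ∑ yᵢ` with `yᵢ ∈ conv Sᵢ` says that `(1/m, …, 1/m, x/m)` lies in the convex
hull of `⋃ᵢ {eᵢ} × Sᵢ ⊆ ℝ^m × ℝ^n`. By Carathéodory it is a positive combination of affinely
independent points of that set; they lie in the hyperplane `∑ⱼ tⱼ = 1`, so there are at most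
`m + n` of them. Each summand uses at least one point, hence at most `n` summands use two or more,
and the others are points of `Sᵢ` (Shapley–Folkman). Integral convexity rounds each of the at most
`min n m` remaining summands to a point of `Sᵢ` at sup-distance `< 1`, so every coordinate of the
integral vector `x - z` has absolute value `< min n m`, i.e. at most `min n m - 1`.
-/

open scoped BigOperators Pointwise

noncomputable section

/-- Coercion of an integer vector to a real vector (sup-norm space). -/
def coeZR {n : ℕ} (v : Fin n → ℤ) : Fin n → ℝ := fun i => (v i : ℝ)

/-- Minkowski sum of a finite family of subsets of ℝ^n. -/
def minkSum {n m : ℕ} (S : Fin m → Set (Fin n → ℝ)) : Set (Fin n → ℝ) :=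
  {x | ∃ z : Fin m → (Fin n → ℝ), (∀ i, z i ∈ S i) ∧ x = ∑ i, z i}

/-- Minkowski sum of a finite family of subsets of ℤ^n. -/
def minkSumZ {n m : ℕ} (S : Fin m → Set (Fin n → ℤ)) : Set (Fin n → ℤ) :=
  {x | ∃ z : Fin m → (Fin n → ℤ), (∀ i, z i ∈ S i) ∧ x = ∑ i, z i}

/-- Integral neighborhood N(x) of a real vector x. -/
def intNbhd {n : ℕ} (x : Fin n → ℝ) : Set (Fin n → ℤ) :=
  {z | ∀ i, |x i - (z i : ℝ)| < 1}

/-- Integral convexity of a set S ⊆ ℤ^n. -/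
def IntegrallyConvex {n : ℕ} (S : Set (Fin n → ℤ)) : Prop :=
  S.Nonempty ∧ ∀ x ∈ convexHull ℝ (coeZR '' S),
    x ∈ convexHull ℝ (coeZR '' (S ∩ intNbhd x))

open Module Finset

theorem AffineIndependent.card_le_finrank_of_forall_eq {𝕜 V κ : Type*} [DivisionRing 𝕜]
    [AddCommGroup V] [Module 𝕜 V] [FiniteDimensional 𝕜 V] [Fintype κ] {p : κ → V}
    (hp : AffineIndependent 𝕜 p) {f : V →ₗ[𝕜] 𝕜} (hf : f ≠ 0) {c : 𝕜} (hpf : ∀ k, f (p k) = c) :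
    Fintype.card κ ≤ finrank 𝕜 V := by
  have hspan : vectorSpan 𝕜 (Set.range p) ≤ LinearMap.ker f := by
    rw [vectorSpan_def, Submodule.span_le]
    rintro _ ⟨_, ⟨k, rfl⟩, _, ⟨k', rfl⟩, rfl⟩
    simp [hpf]
  calc Fintype.card κ ≤ finrank 𝕜 (vectorSpan 𝕜 (Set.range p)) + 1 := hp.card_le_finrank_succ
    _ ≤ finrank 𝕜 (LinearMap.ker f) + 1 := by gcongr; exact Submodule.finrank_mono hspan
    _ ≤ finrank 𝕜 V := Submodule.finrank_lt (by rwa [Ne, LinearMap.ker_eq_top])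

theorem Fintype.card_add_card_filter_one_lt_le_of_surjective {κ ι : Type*} [Fintype κ] [Fintype ι]
    [DecidableEq ι] {f : κ → ι} (hf : Function.Surjective f) :
    Fintype.card ι + #{i | 1 < #{k | f k = i}} ≤ Fintype.card κ := by
  have hfiber : ∀ i, 1 ≤ #{k | f k = i} := fun i => by
    obtain ⟨k, rfl⟩ := hf i
    exact Finset.card_pos.mpr ⟨k, by simp⟩
  calc Fintype.card ι + #{i | 1 < #{k | f k = i}}
      = ∑ i, (1 + if 1 < #{k | f k = i} then 1 else 0) := by
        rw [sum_add_distrib, sum_boole]; simp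
    _ ≤ ∑ i, #{k | f k = i} := sum_le_sum fun i _ => by have := hfiber i; split_ifs <;> omega
    _ = Fintype.card κ := (card_eq_sum_card_fiberwise fun k _ => mem_univ (f k)).symm

section ShapleyFolkman

variable {𝕜 ι E : Type*}

variable (𝕜) in
def cayleySet [Zero 𝕜] [One 𝕜] [DecidableEq ι] (A : ι → Set E) : Set ((ι → 𝕜) × E) :=
  ⋃ i, {Pi.single i 1} ×ˢ A i

theorem mem_cayleySet [Zero 𝕜] [One 𝕜] [DecidableEq ι] {A : ι → Set E} {p : (ι → 𝕜) × E} :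
    p ∈ cayleySet 𝕜 A ↔ ∃ i, p.1 = Pi.single i 1 ∧ p.2 ∈ A i := by
  simp [cayleySet]

variable [Field 𝕜] [LinearOrder 𝕜] [IsStrictOrderedRing 𝕜] [AddCommGroup E] [Module 𝕜 E]

theorem mk_single_mem_convexHull_cayleySet [DecidableEq ι] {A : ι → Set E} {i : ι} {y : E}
    (hy : y ∈ convexHull 𝕜 (A i)) : (Pi.single i 1, y) ∈ convexHull 𝕜 (cayleySet 𝕜 A) := by
  have h : ({Pi.single i 1} : Set (ι → 𝕜)) ×ˢ convexHull 𝕜 (A i) =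
      convexHull 𝕜 ({Pi.single i 1} ×ˢ A i) := by
    rw [convexHull_prod, convexHull_singleton]
  exact convexHull_mono (Set.subset_iUnion (fun j => {Pi.single j 1} ×ˢ A j) i)
    (h ▸ ⟨rfl, hy⟩)

theorem AffineIndependent.card_le_card_add_finrank_of_range_subset_cayleySet [DecidableEq ι]
    [Fintype ι] [FiniteDimensional 𝕜 E] {κ : Type*} [Fintype κ] {A : ι → Set E}
    {z : κ → (ι → 𝕜) × E} (hz : AffineIndependent 𝕜 z) (hzA : Set.range z ⊆ cayleySet 𝕜 A) :
    Fintype.card κ ≤ Fintype.card ι + finrank 𝕜 E := by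
  cases isEmpty_or_nonempty κ
  · simp
  let f : (ι → 𝕜) × E →ₗ[𝕜] 𝕜 := (∑ j, LinearMap.proj j) ∘ₗ LinearMap.fst 𝕜 (ι → 𝕜) E
  have hf : ∀ k, f (z k) = 1 := fun k => by
    obtain ⟨i, hi, -⟩ := mem_cayleySet.1 (hzA ⟨k, rfl⟩)
    simp [f, hi]
  have hf0 : f ≠ 0 := fun h => by simpa [h] using hf (Classical.arbitrary κ)
  simpa [finrank_prod, finrank_fintype_fun_eq_card] using hz.card_le_finrank_of_forall_eq hf0 hf

theorem shapley_folkman [Fintype ι] [FiniteDimensional 𝕜 E] (A : ι → Set E) {y : ι → E}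
    (hy : ∀ i, y i ∈ convexHull 𝕜 (A i)) :
    ∃ (u : ι → E) (s : Finset ι), (∀ i, u i ∈ convexHull 𝕜 (A i)) ∧
      ∑ i, u i = ∑ i, y i ∧ (∀ i ∉ s, u i ∈ A i) ∧ #s ≤ finrank 𝕜 E := by
  classical
  cases isEmpty_or_nonempty ι
  · exact ⟨y, ∅, hy, rfl, fun i => isEmptyElim i, by simp⟩
  set N : 𝕜 := (Fintype.card ι : 𝕜)
  have hN : 0 < N := by positivity
  have hq : ∑ i, N⁻¹ • ((Pi.single i 1 : ι → 𝕜), y i) ∈ convexHull 𝕜 (cayleySet 𝕜 A) :=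
    (convex_convexHull 𝕜 _).sum_mem (fun _ _ => by positivity) (by simp [N, hN.ne'])
      fun i _ => mk_single_mem_convexHull_cayleySet (hy i)
  obtain ⟨κ, _, z, w, hzA, hz, hw, -, hwz⟩ := eq_pos_convex_span_of_mem_convexHull hq
  choose idx hidx using fun k => mem_cayleySet.1 (hzA ⟨k, rfl⟩)
  have hfiber : ∀ i, ∑ k with idx k = i, w k = N⁻¹ := fun i => by
    have := congrArg (fun p => p.1 i) hwz
    simpa [Prod.fst_sum, Finset.sum_apply, (hidx _).1, Pi.single_apply, sum_ite,
      eq_comm (a := i)] using this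
  have hsurj : Function.Surjective idx := fun i => by
    have : ∑ k with idx k = i, w k ≠ 0 := by simp [hfiber i, hN.ne']
    obtain ⟨k, hk, -⟩ := exists_ne_zero_of_sum_ne_zero this
    exact ⟨k, (mem_filter.1 hk).2⟩
  let u i := ∑ k with idx k = i, (N * w k) • (z k).2
  refine ⟨u, ({i | 1 < #{k | idx k = i}} : Finset ι), fun i => ?_, ?_, fun i hi => ?_, ?_⟩
  · refine (convex_convexHull 𝕜 _).sum_mem (fun k _ => (mul_pos hN (hw k)).le) ?_ fun k hk => ?_
    · rw [← mul_sum, hfiber i, mul_inv_cancel₀ hN.ne']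
    · exact subset_convexHull 𝕜 _ ((mem_filter.1 hk).2 ▸ (hidx k).2)
  · have := congrArg Prod.snd hwz
    simp only [Prod.snd_sum, Prod.smul_snd, ← smul_sum] at this
    calc ∑ i, u i = N • ∑ k, w k • (z k).2 := by
          simp only [u, smul_sum, mul_smul]
          exact sum_fiberwise _ _ _
      _ = ∑ i, y i := by rw [this, smul_smul, mul_inv_cancel₀ hN.ne', one_smul]
  · have hne : ({k | idx k = i} : Finset κ).Nonempty := by
      obtain ⟨k, rfl⟩ := hsurj i
      exact ⟨k, by simp⟩
    obtain ⟨k, hk⟩ := card_eq_one.1 (le_antisymm (by simpa using hi) (card_pos.2 hne))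
    have hki : idx k = i := by
      have : k ∈ ({k | idx k = i} : Finset κ) := hk ▸ mem_singleton_self k
      simpa using this
    have hwk : w k = N⁻¹ := by simpa [hk] using hfiber i
    simpa [u, hk, hwk, hN.ne'] using hki ▸ (hidx k).2
  · have hκ := hz.card_le_card_add_finrank_of_range_subset_cayleySet hzA
    have := Fintype.card_add_card_filter_one_lt_le_of_surjective hsurj
    omega

end ShapleyFolkman

theorem coeZR_sum {n : ℕ} {ι : Type*} (s : Finset ι) (v : ι → Fin n → ℤ) :
    coeZR (∑ i ∈ s, v i) = ∑ i ∈ s, coeZR (v i) := by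
  ext j
  simp [coeZR]

theorem image_coeZR_minkSumZ {n m : ℕ} (S : Fin m → Set (Fin n → ℤ)) :
    coeZR '' minkSumZ S = ∑ i, coeZR '' S i := by
  ext x
  simp only [minkSumZ, Set.mem_image, Set.mem_ofPred_eq, Set.mem_fintype_sum]
  constructor
  · rintro ⟨_, ⟨z, hz, rfl⟩, rfl⟩
    exact ⟨fun i => coeZR (z i), fun i => ⟨z i, hz i, rfl⟩, (coeZR_sum _ _).symm⟩
  · rintro ⟨y, hy, rfl⟩
    choose z hz hzy using hy
    exact ⟨∑ i, z i, ⟨z, hz, rfl⟩, by simp [coeZR_sum, hzy]⟩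

theorem IntegrallyConvex.exists_mem_intNbhd {n : ℕ} {S : Set (Fin n → ℤ)}
    (hS : IntegrallyConvex S) {x : Fin n → ℝ} (hx : x ∈ convexHull ℝ (coeZR '' S)) :
    ∃ z ∈ S, z ∈ intNbhd x := by
  obtain ⟨_, ⟨z, hz, rfl⟩⟩ := convexHull_nonempty_iff.1 ⟨x, hS.2 x hx⟩
  exact ⟨z, hz.1, hz.2⟩

theorem Int.abs_cast_le_of_eq_sum_of_abs_lt_one {ι : Type*} {d : ℤ} {s : Finset ι} {f : ι → ℝ}
    (hd : (d : ℝ) = ∑ i ∈ s, f i) (hf : ∀ i ∈ s, |f i| < 1) {k : ℕ} (hs : #s ≤ k)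
    (hk : 1 ≤ k) : |(d : ℝ)| ≤ k - 1 := by
  have hlt : |(d : ℝ)| < k := by
    rcases s.eq_empty_or_nonempty with rfl | hne
    · rw [hd, sum_empty, abs_zero]
      exact_mod_cast hk
    calc |(d : ℝ)| ≤ ∑ i ∈ s, |f i| := hd ▸ abs_sum_le_sum_abs f s
      _ < ∑ i ∈ s, 1 := sum_lt_sum_of_nonempty hne hf
      _ ≤ k := by simpa using hs
  have : |d| ≤ k - 1 := by
    have : |d| < k := by exact_mod_cast hlt
    omega
  exact_mod_cast this

/-- Integral-point version of the ℓ∞ Shapley–Folkman-type theorem. -/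
theorem stmt10 {n m : ℕ} (hn : 2 ≤ n) (hm : 1 ≤ m)
    (S : Fin m → Set (Fin n → ℤ)) (hS : ∀ i, IntegrallyConvex (S i))
    (x : Fin n → ℤ) (hx : coeZR x ∈ convexHull ℝ (coeZR '' minkSumZ S)) :
    ∃ z ∈ minkSumZ S, ‖coeZR x - coeZR z‖ ≤ (min n m : ℝ) - 1 := by
  rw [image_coeZR_minkSumZ, convexHull_sum, Set.mem_fintype_sum] at hx
  obtain ⟨y, hy, hxy⟩ := hx
  obtain ⟨u, s, hu, husum, hus, hs⟩ := shapley_folkman _ hy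
  rw [finrank_fin_fun] at hs
  have hz : ∀ i, ∃ z ∈ S i, z ∈ intNbhd (u i) ∧ (i ∉ s → coeZR z = u i) := fun i => by
    by_cases hi : i ∈ s
    · obtain ⟨z, hzS, hzN⟩ := (hS i).exists_mem_intNbhd (hu i)
      exact ⟨z, hzS, hzN, absurd hi⟩
    · obtain ⟨z, hzS, hzu⟩ := hus i hi
      exact ⟨z, hzS, fun j => by simp [← hzu, coeZR], fun _ => hzu⟩
  choose z hzS hzN hzu using hz
  have hk : 1 ≤ min n m := le_min (by omega) hm
  have hsk : #s ≤ min n m := le_min hs (card_le_univ s |>.trans_eq (Fintype.card_fin m))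
  refine ⟨∑ i, z i, ⟨z, hzS, rfl⟩, (pi_norm_le_iff_of_nonneg ?_).2 fun j => ?_⟩
  · have : (1 : ℝ) ≤ min (n : ℝ) m := by exact_mod_cast hk
    linarith
  have hd : ((x j - (∑ i, z i) j : ℤ) : ℝ) = ∑ i ∈ s, (u i j - z i j) := by
    have hxj : (x j : ℝ) = ∑ i, u i j := by
      rw [← Finset.sum_apply, husum, hxy]
      rfl
    rw [sum_subset (subset_univ s) fun i _ hi => ?_]
    · push_cast [Finset.sum_apply]
      rw [hxj, sum_sub_distrib]
    · simp [← hzu i hi, coeZR]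
  simpa [coeZR] using Int.abs_cast_le_of_eq_sum_of_abs_lt_one hd (fun i _ => hzN i j) hsk hk
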